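/- Let S₁, …, S_m be subsets of {1, …, n} and let N be a positive integer. Construct a two-layer DAG with first layer L₁ = {1, …, m}, second layer L₂ = {1, …, n} × {1, …, N}, and a directed edge from j ∈ L₁ to (i, r) ∈ L₂ if and only if i ∈ S_j; every edge has weight 1 and every vertex has fixed threshold 1. Then in the deterministic linear-threshold influence process on this DAG, for every seed set W ⊆ L₁ the size of the final activated set equals σ(W) = |W| + N·|⋃_{j∈W} S_j|. -/
import Mathlib


open Finset
open scoped Classical

/-- The final activated set of the (deterministic) threshold influence process on a
weighted digraph with weights `wt`, thresholds `θ` and direct influences `x`: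
starting from `∅`, a vertex `v` activates once the total weight of edges from the
active set into `v` plus `x v` reaches `θ v`; the process runs for `|W|` rounds. -/
noncomputable def finalSet {W : Type*} [Fintype W] (wt : W → W → ℝ) (θ x : W → ℝ) :
    Finset W :=
  (fun S => S ∪ Finset.univ.filter (fun v => θ v ≤ (∑ u ∈ S, wt u v) + x v))^[Fintype.card W] ∅

/-- The Max-Coverage two-layer DAG: first layer `Fin m` (one vertex per set `S j`),
second layer `Fin n × Fin N` (`N` copies of each ground element), an edge of weight
`1` from `j` to `(i, r)` iff `i ∈ S j`, and all thresholds `1`.  For every seed set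
`W ⊆ L₁`, the final activated set has size `|W| + N · |⋃_{j ∈ W} S j|`. -/
theorem stmt17 (m n N : ℕ) (hN : 0 < N) (S : Fin m → Finset (Fin n))
    (W : Finset (Fin m)) :
    (finalSet
        (fun a b : Fin m ⊕ Fin n × Fin N =>
          match a, b with
          | Sum.inl j, Sum.inr (i, _) => if i ∈ S j then (1 : ℝ) else 0
          | _, _ => 0)
        (fun _ => 1)
        (fun z => if z ∈ W.image Sum.inl then (1 : ℝ) else 0)).card
      = W.card + N * (W.biUnion S).card := by
  classical
  set wt : (Fin m ⊕ Fin n × Fin N) → (Fin m ⊕ Fin n × Fin N) → ℝ :=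
    (fun a b : Fin m ⊕ Fin n × Fin N =>
      match a, b with
      | Sum.inl j, Sum.inr (i, _) => if i ∈ S j then (1 : ℝ) else 0
      | _, _ => 0) with hwt
  set x : (Fin m ⊕ Fin n × Fin N) → ℝ :=
    (fun z => if z ∈ W.image Sum.inl then (1 : ℝ) else 0) with hx
  set f : Finset (Fin m ⊕ Fin n × Fin N) → Finset (Fin m ⊕ Fin n × Fin N) :=
    fun A => A ∪ Finset.univ.filter (fun v => (1 : ℝ) ≤ (∑ u ∈ A, wt u v) + x v) with hf
  have hfinal : finalSet wt (fun _ => 1) x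
      = f^[Fintype.card (Fin m ⊕ Fin n × Fin N)] ∅ := by
    unfold finalSet
    rw [hf]
    congr 1
    funext A
    ext v
    simp
  rw [hfinal]
  -- basic weight facts
  have hwt_inl : ∀ (u : Fin m ⊕ Fin n × Fin N) (j : Fin m), wt u (Sum.inl j) = 0 := by
    rintro (u | ⟨i, r⟩) j <;> rfl
  have hwt_inr_inr : ∀ (c : Fin n × Fin N) (i : Fin n) (r : Fin N),
      wt (Sum.inr c) (Sum.inr (i, r)) = 0 := by
    rintro ⟨a, b⟩ i r; rfl
  have hsum_inl : ∀ (A : Finset (Fin m ⊕ Fin n × Fin N)) (j : Fin m),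
      (∑ u ∈ A, wt u (Sum.inl j)) = 0 :=
    fun A j => Finset.sum_eq_zero fun u _ => hwt_inl u j
  have hx_inl : ∀ j : Fin m, x (Sum.inl j) = if j ∈ W then (1 : ℝ) else 0 := by
    intro j
    simp [hx, Sum.inl.injEq]
  have hx_inr : ∀ c : Fin n × Fin N, x (Sum.inr c) = 0 := by
    intro c; simp [hx]
  set T : Finset (Fin m ⊕ Fin n × Fin N) :=
    W.image Sum.inl ∪ ((W.biUnion S) ×ˢ (Finset.univ : Finset (Fin N))).image Sum.inr with hT
  have hdisj : ∀ (B : Finset (Fin m)) (C : Finset (Fin n × Fin N)),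
      Disjoint (B.image Sum.inl) (C.image (Sum.inr : Fin n × Fin N → Fin m ⊕ Fin n × Fin N)) := by
    intro B C
    simp [Finset.disjoint_left]
  have hsum_inr : ∀ (B : Finset (Fin m)) (C : Finset (Fin n × Fin N)) (i : Fin n) (r : Fin N),
      (∑ u ∈ B.image Sum.inl ∪ C.image Sum.inr, wt u (Sum.inr (i, r)))
        = ((B.filter fun j => i ∈ S j).card : ℝ) := by
    intro B C i r
    rw [Finset.sum_union (hdisj B C), Finset.sum_image (by simp), Finset.sum_image (by simp)]
    have h2 : (∑ c ∈ C, wt (Sum.inr c) (Sum.inr (i, r))) = 0 :=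
      Finset.sum_eq_zero fun c _ => hwt_inr_inr c i r
    rw [h2, add_zero]
    simp [hwt, Finset.sum_boole]
  -- step 1
  have h1 : f ∅ = W.image Sum.inl := by
    ext v
    rcases v with j | ⟨i, r⟩
    · simp [hf, hx_inl j]
      by_cases hj : j ∈ W <;> simp [hj]
    · simp [hf, hx_inr]
  -- step 2
  have h2 : f (W.image Sum.inl) = T := by
    have : W.image Sum.inl = W.image Sum.inl ∪ (∅ : Finset (Fin n × Fin N)).image Sum.inr := by
      simp
    ext v
    rcases v with j | ⟨i, r⟩
    · simp only [hf, Finset.mem_union, Finset.mem_filter, Finset.mem_univ, true_and]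
      rw [hT]
      have : (∑ u ∈ W.image Sum.inl, wt u (Sum.inl j)) = 0 := hsum_inl _ j
      rw [this, zero_add, hx_inl j]
      simp [Sum.inl.injEq]
      by_cases hj : j ∈ W <;> simp [hj]
    · simp only [hf, Finset.mem_union, Finset.mem_filter, Finset.mem_univ, true_and]
      rw [hT]
      have hs : (∑ u ∈ W.image Sum.inl, wt u (Sum.inr (i, r)))
          = ((W.filter fun j => i ∈ S j).card : ℝ) := by
        have := hsum_inr W ∅ i r
        simpa using this
      rw [hs, hx_inr, add_zero]
      have : ((1 : ℝ) ≤ ((W.filter fun j => i ∈ S j).card : ℝ)) ↔ i ∈ W.biUnion S := by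
        rw [Nat.one_le_cast]
        simp [Finset.card_pos, Finset.filter_nonempty_iff, Finset.mem_biUnion]
      rw [this]
      simp
  -- fixed point
  have h3 : f T = T := by
    ext v
    rcases v with j | ⟨i, r⟩
    · simp only [hf, Finset.mem_union, Finset.mem_filter, Finset.mem_univ, true_and]
      rw [hsum_inl _ j, zero_add, hx_inl j]
      constructor
      · rintro (h | h)
        · exact h
        · by_cases hj : j ∈ W
          · rw [hT]; simp [hj]
          · simp [hj] at h; linarith
      · exact Or.inl
    · simp only [hf, Finset.mem_union, Finset.mem_filter, Finset.mem_univ, true_and]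
      rw [hT, hsum_inr W _ i r, hx_inr, add_zero]
      have hiff : ((1 : ℝ) ≤ ((W.filter fun j => i ∈ S j).card : ℝ)) ↔ i ∈ W.biUnion S := by
        rw [Nat.one_le_cast]
        simp [Finset.card_pos, Finset.filter_nonempty_iff, Finset.mem_biUnion]
      rw [hiff]
      simp
  have hiter : ∀ k, f^[k] T = T := by
    intro k; induction k with
    | zero => rfl
    | succ k ih => rw [Function.iterate_succ_apply, h3, ih]
  have hcard : Fintype.card (Fin m ⊕ Fin n × Fin N) = m + n * N := by
    simp
  -- compute |T|
  have hTcard : T.card = W.card + N * (W.biUnion S).card := by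
    rw [hT, Finset.card_union_of_disjoint (hdisj _ _),
      Finset.card_image_of_injective _ Sum.inl_injective,
      Finset.card_image_of_injective _ Sum.inr_injective,
      Finset.card_product]
    simp [mul_comm]
  rw [hcard]
  rcases e : m + n * N with _ | c
  · -- m + n*N = 0 : everything empty
    have hm : m = 0 := by omega
    subst hm
    have hW : W = ∅ := Finset.eq_empty_of_isEmpty W
    simp [hW]
  · rcases c with _ | k
    · -- exactly one vertex
      have : f^[1] ∅ = T := by
        rw [Function.iterate_one, h1, hT]
        rcases Nat.eq_zero_or_pos m with hm | hm
        · subst hm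
          have hW : W = ∅ := Finset.eq_empty_of_isEmpty W
          simp [hW]
        · have hn : n = 0 := by
            rcases Nat.eq_zero_or_pos n with h | h
            · exact h
            · exfalso; nlinarith [Nat.one_le_iff_ne_zero.mpr hN.ne']
          subst hn
          have : W.biUnion S = ∅ := Finset.eq_empty_of_isEmpty _
          simp [this]
      rw [this, hTcard]
    · -- at least two vertices
      have : f^[k + 2] ∅ = T := by
        have : f^[k + 2] ∅ = f^[k] (f (f ∅)) := by
          rw [show k + 2 = k + 2 from rfl]
          rw [Function.iterate_add_apply f k 2]
          rfl
        rw [this, h1, h2, hiter k]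
      rw [this, hTcard]
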